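/- arXiv:2207.04323 — 4 statements merged into one kernel-verified Lean document; each statement's English description precedes it below -/
import Mathlib

section
/- For every X ∈ 𝔐₀ with X ∉ ℂI there exists σ ∈ P_ℤ such that T_σ(X) ≠ X; consequently the operator system 𝔐₀^{ex} := {X ∈ 𝔐₀ : T_σ(X) = X for every σ ∈ P_ℤ} equals ℂI. -/
open scoped Classical

noncomputable section

variable {H : Type*} [NormedAddCommGroup H] [InnerProductSpace ℂ H] [CompleteSpace H]

def IsLeast' (i : ℤ) (A : Finset ℤ) : Prop := i ∈ A ∧ ∀ x ∈ A, i ≤ x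

def LtAll (i : ℤ) (A : Finset ℤ) : Prop := ∀ x ∈ A, i < x

def MonotoneAnnOps (e : Finset ℤ → H) (a : ℤ → H →L[ℂ] H) : Prop :=
  Orthonormal ℂ e ∧ (Submodule.span ℂ (Set.range e)).topologicalClosure = ⊤ ∧
  (∀ i A, (IsLeast' i A → a i (e A) = e (A.erase i)) ∧ (¬ IsLeast' i A → a i (e A) = 0)) ∧
  (∀ i A, (LtAll i A → star (a i) (e A) = e (insert i A)) ∧ (¬ LtAll i A → star (a i) (e A) = 0))

/-- The element `X_{(λ₁, λ₂)}` of the Hamel basis of `𝔐₀` attached to a pair of finite subsets of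
`ℤ`: for `λ₁ = λ₂ = {i}` it is the π-form `aᵢ aᵢ†`, and otherwise it is the λ-form
`a†_{i_1} ⋯ a†_{i_m} a_{j_1} ⋯ a_{j_n}` where `λ₁ = {i_1 < ⋯ < i_m}`, `λ₂ = {j_n < ⋯ < j_1}`
(the identity `I` when `λ₁ = λ₂ = ∅`). -/
def wordOp (a : ℤ → H →L[ℂ] H) (p : Finset ℤ × Finset ℤ) : H →L[ℂ] H :=
  if h : ∃ i : ℤ, p.1 = {i} ∧ p.2 = {i} then a h.choose * star (a h.choose)
  else ((p.1.sort (· ≤ ·)).map fun i => star (a i)).prod * ((p.2.sort (· ≤ ·)).reverse.map a).prod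

/-- A permutation of `ℤ` is order preserving on a finite set if it is strictly increasing there. -/
def OrdPres (σ : Equiv.Perm ℤ) (s : Finset ℤ) : Prop := ∀ x ∈ s, ∀ y ∈ s, x < y → σ x < σ y

/-- The map `T_σ`, expressed in the coordinates given by the Hamel basis
`{X_{(λ₁,λ₂)} : λ₁, λ₂ ⊆ ℤ finite}` of `𝔐₀`: it sends the basis vector indexed by `(λ₁, λ₂)` to
the one indexed by `(σ(λ₁), σ(λ₂))` if `σ` is order preserving on both `λ₁` and `λ₂`, and to `0`
otherwise. -/
def Tcoord (σ : Equiv.Perm ℤ) :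
    ((Finset ℤ × Finset ℤ) →₀ ℂ) →ₗ[ℂ] ((Finset ℤ × Finset ℤ) →₀ ℂ) :=
  Finsupp.lsum ℂ fun p =>
    if OrdPres σ p.1 ∧ OrdPres σ p.2 then Finsupp.lsingle (p.1.image σ, p.2.image σ) else 0

/-!
A vector of coordinates `v` that is not supported on `(∅, ∅)` mentions some largest index `m`.
The transposition `σ = (m m+1)` is order preserving on every index set occurring in `v`, so
`T_σ` merely relabels the coordinates of `v` injectively, and it moves a nonzero coordinate to an
index set containing `m + 1`, where `v` vanishes. Hence `T_σ v ≠ v`, and since the words form a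
Hamel basis the operators they represent differ as well.
-/

lemma wordOp_empty (a : ℤ → H →L[ℂ] H) : wordOp a (∅, ∅) = 1 := by
  rw [wordOp, dif_neg]
  · simp
  · rintro ⟨i, h, -⟩
    exact Finset.singleton_ne_empty i h.symm

lemma ordPres_empty (σ : Equiv.Perm ℤ) : OrdPres σ ∅ := by
  simp [OrdPres]

lemma ordPres_swap_of_forall_le {m : ℤ} {A : Finset ℤ} (hA : ∀ x ∈ A, x ≤ m) :
    OrdPres (Equiv.swap m (m + 1)) A := by
  intro x hx y hy hxy
  have hxm : x < m := lt_of_lt_of_le hxy (hA y hy)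
  rw [Equiv.swap_apply_of_ne_of_ne hxm.ne (by omega)]
  rcases eq_or_ne y m with rfl | hym
  · rw [Equiv.swap_apply_left]
    omega
  · rwa [Equiv.swap_apply_of_ne_of_ne hym (by linarith [hA y hy])]

lemma finite_setOf_swap_apply_ne (i j : ℤ) : {x : ℤ | Equiv.swap i j x ≠ x}.Finite :=
  (Set.toFinite {i, j}).subset fun x hx => by
    by_contra hij
    simp only [Set.mem_insert_iff, Set.mem_singleton_iff, not_or] at hij
    exact hx (Equiv.swap_apply_of_ne_of_ne hij.1 hij.2)

lemma Tcoord_single_empty (σ : Equiv.Perm ℤ) (c : ℂ) :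
    Tcoord σ (Finsupp.single (∅, ∅) c) = Finsupp.single (∅, ∅) c := by
  simp [Tcoord, ordPres_empty]

lemma Tcoord_eq_mapDomain {σ : Equiv.Perm ℤ} {v : (Finset ℤ × Finset ℤ) →₀ ℂ}
    (hσ : ∀ p ∈ v.support, OrdPres σ p.1 ∧ OrdPres σ p.2) :
    Tcoord σ v = v.mapDomain (Prod.map (Finset.image σ) (Finset.image σ)) := by
  rw [Tcoord, Finsupp.lsum_apply, Finsupp.mapDomain]
  refine Finsupp.sum_congr fun p hp => ?_
  rw [if_pos (hσ p hp)]
  rfl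

lemma exists_Tcoord_ne_self {v : (Finset ℤ × Finset ℤ) →₀ ℂ}
    (hv : ∀ c : ℂ, v ≠ Finsupp.single (∅, ∅) c) :
    ∃ σ : Equiv.Perm ℤ, {x : ℤ | σ x ≠ x}.Finite ∧ Tcoord σ v ≠ v := by
  set S : Finset ℤ := v.support.sup fun p => p.1 ∪ p.2
  have hsub : ∀ p ∈ v.support, p.1 ∪ p.2 ⊆ S := fun p hp =>
    Finset.le_sup (f := fun q : Finset ℤ × Finset ℤ => q.1 ∪ q.2) hp
  have hS : S.Nonempty := by
    rw [Finset.nonempty_iff_ne_empty]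
    intro hS
    refine hv (v (∅, ∅)) (Finsupp.support_subset_singleton.mp fun p hp => ?_)
    have hp' := hsub p hp
    rw [hS, Finset.subset_empty, Finset.union_eq_empty] at hp'
    simp [Prod.ext_iff, hp']
  set m := S.max' hS
  have hm1 : m + 1 ∉ S := fun h => by linarith [S.le_max' _ h]
  set σ := Equiv.swap m (m + 1)
  set f := Prod.map (Finset.image σ) (Finset.image σ)
  have hf : Function.Injective f :=
    (Finset.image_injective σ.injective).prodMap (Finset.image_injective σ.injective)
  have hT : Tcoord σ v = v.mapDomain f := by
    refine Tcoord_eq_mapDomain fun p hp => ⟨?_, ?_⟩ <;>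
      exact ordPres_swap_of_forall_le fun x hx => S.le_max' x (hsub p hp (by simp [hx]))
  obtain ⟨p, hp, hmp⟩ := Finset.mem_sup.mp (S.max'_mem hS)
  have hvfp : v (f p) = 0 := by
    refine Finsupp.notMem_support_iff.mp fun hfp => hm1 (hsub _ hfp ?_)
    rw [Prod.map_fst, Prod.map_snd, ← Finset.image_union]
    exact Finset.mem_image.mpr ⟨m, hmp, Equiv.swap_apply_left _ _⟩
  refine ⟨σ, finite_setOf_swap_apply_ne _ _, fun hfix => Finsupp.mem_support_iff.mp hp ?_⟩
  rw [← Finsupp.mapDomain_apply hf v p, ← hT, hfix, hvfp]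

theorem stmt2_general (a : ℤ → H →L[ℂ] H)
    (hbasis : LinearIndependent ℂ (wordOp a)) :
    (∀ v : (Finset ℤ × Finset ℤ) →₀ ℂ,
      (¬ ∃ c : ℂ, Finsupp.linearCombination ℂ (wordOp a) v = c • (1 : H →L[ℂ] H)) →
      ∃ σ : Equiv.Perm ℤ, {x : ℤ | σ x ≠ x}.Finite ∧
        Finsupp.linearCombination ℂ (wordOp a) (Tcoord σ v) ≠
          Finsupp.linearCombination ℂ (wordOp a) v) ∧
    {X : H →L[ℂ] H | ∃ v : (Finset ℤ × Finset ℤ) →₀ ℂ,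
        Finsupp.linearCombination ℂ (wordOp a) v = X ∧
        ∀ σ : Equiv.Perm ℤ, {x : ℤ | σ x ≠ x}.Finite →
          Finsupp.linearCombination ℂ (wordOp a) (Tcoord σ v) = X} =
      {X : H →L[ℂ] H | ∃ c : ℂ, X = c • 1} := by
  have lc_single (c : ℂ) : Finsupp.linearCombination ℂ (wordOp a) (Finsupp.single (∅, ∅) c) =
      c • 1 := by
    rw [Finsupp.linearCombination_single, wordOp_empty]
  have moved : ∀ v : (Finset ℤ × Finset ℤ) →₀ ℂ,
      (¬ ∃ c : ℂ, Finsupp.linearCombination ℂ (wordOp a) v = c • (1 : H →L[ℂ] H)) →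
      ∃ σ : Equiv.Perm ℤ, {x : ℤ | σ x ≠ x}.Finite ∧
        Finsupp.linearCombination ℂ (wordOp a) (Tcoord σ v) ≠
          Finsupp.linearCombination ℂ (wordOp a) v := by
    intro v hv
    obtain ⟨σ, hσ, hne⟩ := exists_Tcoord_ne_self (v := v) fun c hc => hv ⟨c, by rw [hc, lc_single]⟩
    exact ⟨σ, hσ, hbasis.ne hne⟩
  refine ⟨moved, Set.ext fun X => ⟨?_, ?_⟩⟩
  · rintro ⟨v, rfl, hfix⟩
    by_contra hX
    obtain ⟨σ, hσ, hne⟩ := moved v hX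
    exact hne (hfix σ hσ)
  · rintro ⟨c, rfl⟩
    exact ⟨Finsupp.single (∅, ∅) c, lc_single c, fun σ _ => by rw [Tcoord_single_empty, lc_single]⟩

theorem stmt2 (e : Finset ℤ → H) (a : ℤ → H →L[ℂ] H) (hma : MonotoneAnnOps e a)
    (hbasis : LinearIndependent ℂ (wordOp a))
    (hspan : Submodule.span ℂ (Set.range (wordOp a)) =
      Subalgebra.toSubmodule (StarAlgebra.adjoin ℂ (Set.range a)).toSubalgebra) :
    (∀ v : (Finset ℤ × Finset ℤ) →₀ ℂ,
      (¬ ∃ c : ℂ, Finsupp.linearCombination ℂ (wordOp a) v = c • (1 : H →L[ℂ] H)) →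
      ∃ σ : Equiv.Perm ℤ, {x : ℤ | σ x ≠ x}.Finite ∧
        Finsupp.linearCombination ℂ (wordOp a) (Tcoord σ v) ≠
          Finsupp.linearCombination ℂ (wordOp a) v) ∧
    {X : H →L[ℂ] H | ∃ v : (Finset ℤ × Finset ℤ) →₀ ℂ,
        Finsupp.linearCombination ℂ (wordOp a) v = X ∧
        ∀ σ : Equiv.Perm ℤ, {x : ℤ | σ x ≠ x}.Finite →
          Finsupp.linearCombination ℂ (wordOp a) (Tcoord σ v) = X} =
      {X : H →L[ℂ] H | ∃ c : ℂ, X = c • 1} :=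
  stmt2_general a hbasis

end
end

section
/- Let P_ζ ∈ B(F_m) denote the orthogonal projection onto ℂζ. Then ⋂_{n∈ℕ} W*({a_j : j ∈ ℤ, |j| > n}) = ℂP_ζ + ℂP_ζ^⊥, where W*(S) denotes the von Neumann algebra generated by S in B(F_m). In other words, the tail algebra of the monotone stochastic process associated with the vacuum state ω = ⟨·ζ, ζ⟩ equals ℂP_ζ ⊕ ℂP_ζ^⊥ ≅ ℂ ⊕ ℂ. -/
noncomputable section

variable {H : Type*} [NormedAddCommGroup H] [InnerProductSpace ℂ H] [CompleteSpace H]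

/-- The von Neumann algebra `W*(S)` generated by a set `S` of bounded operators: the double
commutant of `S ∪ S*`. -/
def vNgen (S : Set (H →L[ℂ] H)) : Set (H →L[ℂ] H) :=
  Set.centralizer (Set.centralizer (S ∪ star '' S))

/-- The rank-one orthogonal projection onto `ℂ ζ`, for a unit vector `ζ`. -/
def projVac (ζ : H) : H →L[ℂ] H := (innerSL ℂ ζ).smulRight ζ

/-!
For `m` commuting with the tail generators `a j, a j†` (`|j| > n`) and `A ≠ ∅`, pick `j > n`
beyond `A`: then `ζ = a j a j† ζ` and `a j† e_A = 0`, so `⟪e_A, m ζ⟫ = ⟪a j† e_A, a j† m ζ⟫ = 0`.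
Thus `ζ` is an eigenvector of `m` and of `m*`, i.e. `P_ζ` lies in every tail algebra.

Conversely, for nonempty blocks `B, B' ⊆ [-n, n]`, exchanging `B` and `B'` as the part of an index
set at or above `-n` permutes the basis by a unitary commuting with the tail generators. So an
operator `T` in the tail algebra has the same matrix entries after swapping any nonempty `A` with
a far singleton `{N}`. As `N → ∞`, Bessel's inequality kills `⟪e_{N}, x⟫`, which makes the
off-diagonal entries vanish and the diagonal entries on nonempty sets equal.
-/

open scoped InnerProductSpace
open Filter

section Hilbert

variable {ι 𝕜 E : Type*} [RCLike 𝕜] [NormedAddCommGroup E] [InnerProductSpace 𝕜 E]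

/-- Bessel's inequality forces the coefficients along an orthonormal sequence to tend to zero. -/
theorem Orthonormal.eq_zero_of_eventually_inner_eq {v : ℕ → E} (hv : Orthonormal 𝕜 v) (x : E)
    {c : 𝕜} (h : ∀ᶠ N in atTop, ⟪v N, x⟫_𝕜 = c) : c = 0 := by
  have hlim : Tendsto (fun N => ‖⟪v N, x⟫_𝕜‖ ^ 2) atTop (nhds (‖c‖ ^ 2)) :=
    tendsto_const_nhds.congr' (h.mono fun N hN => by simp only [hN])
  simpa using tendsto_nhds_unique hlim (hv.inner_products_summable (x := x)).tendsto_atTop_zero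

theorem LinearIsometryEquiv.inner_map_apply_map_of_commute (U : E ≃ₗᵢ[𝕜] E) {T : E →L[𝕜] E}
    (hUT : Commute (U : E →L[𝕜] E) T) (x y : E) : ⟪U x, T (U y)⟫_𝕜 = ⟪x, T y⟫_𝕜 := by
  rw [← U.inner_map_map x (T y)]
  exact congrArg (⟪U x, ·⟫_𝕜) (congrFun (congrArg DFunLike.coe hUT.eq) y).symm

namespace HilbertBasis

variable (b : HilbertBasis ι 𝕜 E)

theorem ext_continuousLinearMap {S T : E →L[𝕜] E} (h : ∀ i, S (b i) = T (b i)) : S = T :=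
  ContinuousLinearMap.ext_on (Submodule.dense_iff_topologicalClosure_eq_top.2 b.dense_span)
    (Set.forall_mem_range.2 h)

theorem eq_inner_smul_of_inner_eq_zero {x : E} {i : ι} (h : ∀ j ≠ i, ⟪b j, x⟫_𝕜 = 0) :
    x = ⟪b i, x⟫_𝕜 • b i := by
  refine (b.hasSum_repr x).unique ?_
  rw [← b.repr_apply_apply]
  exact hasSum_single i fun j hj => by rw [b.repr_apply_apply, h j hj, zero_smul]

variable [CompleteSpace E]

def permute (σ : Equiv.Perm ι) : E ≃ₗᵢ[𝕜] E :=
  b.repr.trans (HilbertBasis.mk (b.orthonormal.comp σ σ.injective) (by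
    rw [Set.range_comp, σ.range_eq_univ, Set.image_univ, b.dense_span])).repr.symm

theorem permute_apply (σ : Equiv.Perm ι) (i : ι) : b.permute σ (b i) = b (σ i) := by
  classical
  simp [permute, b.repr_self]

theorem commute_permute {σ : Equiv.Perm ι} {X : E →L[𝕜] E} {p : ι → Prop} {g : ι → ι}
    (hX : ∀ i, (p i → X (b i) = b (g i)) ∧ (¬ p i → X (b i) = 0))
    (hp : ∀ i, p (σ i) ↔ p i) (hg : ∀ i, p i → σ (g i) = g (σ i)) :
    Commute (b.permute σ : E →L[𝕜] E) X := by
  refine b.ext_continuousLinearMap fun i => ?_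
  simp only [mul_apply_eq_comp, ContinuousLinearEquiv.coe_coe,
    LinearIsometryEquiv.coe_toContinuousLinearEquiv, permute_apply]
  by_cases hi : p i
  · rw [(hX i).1 hi, (hX _).1 ((hp i).2 hi), permute_apply, hg i hi]
  · rw [(hX i).2 hi, (hX _).2 (mt (hp i).1 hi), map_zero]

end HilbertBasis

end Hilbert

theorem smul_add_smul_one_sub_mem_vNgen {S : Set (H →L[ℂ] H)} {P : H →L[ℂ] H} (hP : P ∈ vNgen S)
    (c d : ℂ) : c • P + d • (1 - P) ∈ vNgen S := by
  rw [vNgen, ← Subalgebra.coe_centralizer ℂ] at hP ⊢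
  exact add_mem (Subalgebra.smul_mem _ hP c) (Subalgebra.smul_mem _ (sub_mem (one_mem _) hP) d)

theorem commute_projVac {ζ : H} {m : H →L[ℂ] H} {c c' : ℂ} (h : m ζ = c • ζ)
    (h' : star m ζ = c' • ζ) : Commute m (projVac ζ) := by
  have hcc' : c • ζ = starRingEnd ℂ c' • ζ := by
    rcases eq_or_ne ζ 0 with rfl | hζ
    · simp
    have key : ⟪ζ, m ζ⟫_ℂ = ⟪star m ζ, ζ⟫_ℂ := by
      rw [ContinuousLinearMap.star_eq_adjoint, ContinuousLinearMap.adjoint_inner_left]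
    rw [h, h', inner_smul_right, inner_smul_left] at key
    rw [mul_right_cancel₀ (inner_self_ne_zero.2 hζ) key]
  refine ContinuousLinearMap.ext fun x => ?_
  have hmx : ⟪ζ, m x⟫_ℂ = starRingEnd ℂ c' * ⟪ζ, x⟫_ℂ := by
    rw [← ContinuousLinearMap.adjoint_inner_left, ← ContinuousLinearMap.star_eq_adjoint, h',
      inner_smul_left]
  simp only [projVac, mul_apply_eq_comp, ContinuousLinearMap.smulRight_apply,
    innerSL_apply_apply, map_smul, h, hmx, hcc', smul_smul, mul_comm]

section IndexSets

variable {α : Type*} [LinearOrder α] {c : α} {D X : Finset α}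

theorem Finset.filter_lt_union_of_le (hX : ∀ x ∈ X, c ≤ x) :
    (D.filter (· < c) ∪ X).filter (· < c) = D.filter (· < c) := by
  ext x
  have := hX x
  simp only [Finset.mem_filter, Finset.mem_union]
  grind

theorem Finset.filter_le_union_of_le (hX : ∀ x ∈ X, c ≤ x) :
    (D.filter (· < c) ∪ X).filter (c ≤ ·) = X := by
  ext x
  have := hX x
  simp only [Finset.mem_filter, Finset.mem_union]
  grind

theorem Finset.filter_lt_union_filter_le (c : α) (D : Finset α) :
    D.filter (· < c) ∪ D.filter (c ≤ ·) = D := by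
  ext x
  simp only [Finset.mem_filter, Finset.mem_union]
  grind

theorem isLeast'_filter_lt_iff {c j : ℤ} {D : Finset ℤ} (hj : j < c) :
    IsLeast' j (D.filter (· < c)) ↔ IsLeast' j D := by
  simp only [IsLeast', Finset.mem_filter]
  grind

theorem ltAll_filter_lt_iff {c j : ℤ} {D : Finset ℤ} (hj : j < c) :
    LtAll j (D.filter (· < c)) ↔ LtAll j D := by
  simp only [LtAll, Finset.mem_filter]
  grind

def WindowBlock (n : ℕ) (B : Finset ℤ) : Prop := B.Nonempty ∧ ∀ x ∈ B, |x| ≤ n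

/-- Indices `j < -n` are untouched, and an index set all of whose elements exceed `n` is fixed:
this is why the induced unitary commutes with `a j` and `a j†` for `|j| > n`. -/
def tailSwap (n : ℕ) (B B' D : Finset ℤ) : Finset ℤ :=
  D.filter (· < -(n : ℤ)) ∪ Equiv.swap B B' (D.filter (-(n : ℤ) ≤ ·))

namespace tailSwap

variable {n : ℕ} {B B' D : Finset ℤ} {j : ℤ}

theorem eq_swap (hD : ∀ x ∈ D, -(n : ℤ) ≤ x) : tailSwap n B B' D = Equiv.swap B B' D := by
  rw [tailSwap, Finset.filter_true_of_mem hD, Finset.filter_false_of_mem (by simpa using hD),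
    Finset.empty_union]

theorem le_of_mem_swap (hB : WindowBlock n B) (hB' : WindowBlock n B') :
    ∀ x ∈ Equiv.swap B B' (D.filter (-(n : ℤ) ≤ ·)), -(n : ℤ) ≤ x := by
  rw [Equiv.swap_apply_def]
  split_ifs
  · exact fun x hx => (abs_le.1 (hB'.2 x hx)).1
  · exact fun x hx => (abs_le.1 (hB.2 x hx)).1
  · simp

theorem involutive (hB : WindowBlock n B) (hB' : WindowBlock n B') :
    Function.Involutive (tailSwap n B B') := by
  intro D
  have hle := le_of_mem_swap (D := D) hB hB'
  rw [tailSwap, tailSwap, Finset.filter_lt_union_of_le hle, Finset.filter_le_union_of_le hle,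
    Equiv.swap_apply_self, Finset.filter_lt_union_filter_le]

theorem eq_self_of_forall_lt (hB : WindowBlock n B) (hB' : WindowBlock n B')
    (hD : ∀ x ∈ D, (n : ℤ) < x) : tailSwap n B B' D = D := by
  have hne : ∀ {C}, WindowBlock n C → D.filter (-(n : ℤ) ≤ ·) ≠ C := by
    rintro C ⟨⟨x, hx⟩, hC⟩ rfl
    have := hD x (Finset.mem_filter.1 hx).1
    have := (abs_le.1 (hC x hx)).2
    omega
  rw [tailSwap, Equiv.swap_apply_of_ne_of_ne (hne hB) (hne hB'),
    Finset.filter_lt_union_filter_le]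

theorem filter_lt (hB : WindowBlock n B) (hB' : WindowBlock n B') :
    (tailSwap n B B' D).filter (· < -(n : ℤ)) = D.filter (· < -(n : ℤ)) :=
  Finset.filter_lt_union_of_le (le_of_mem_swap hB hB')

theorem insert_of_lt (hj : j < -(n : ℤ)) :
    tailSwap n B B' (insert j D) = insert j (tailSwap n B B' D) := by
  rw [tailSwap, tailSwap, Finset.filter_insert, Finset.filter_insert, if_pos hj,
    if_neg (not_le.2 hj), Finset.insert_union]

theorem erase_of_lt (hB : WindowBlock n B) (hB' : WindowBlock n B') (hj : j < -(n : ℤ)) :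
    tailSwap n B B' (D.erase j) = (tailSwap n B B' D).erase j := by
  have hle := le_of_mem_swap (D := D) hB hB'
  have hjD : j ∉ D.filter (-(n : ℤ) ≤ ·) := by simp; omega
  have hjS : j ∉ Equiv.swap B B' (D.filter (-(n : ℤ) ≤ ·)) := fun h => by have := hle j h; omega
  rw [tailSwap, tailSwap, Finset.filter_erase, Finset.filter_erase, Finset.erase_union_distrib,
    Finset.erase_eq_of_notMem hjD, Finset.erase_eq_of_notMem hjS]

theorem isLeast'_iff (hB : WindowBlock n B) (hB' : WindowBlock n B') (hj : (n : ℤ) < |j|) :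
    IsLeast' j (tailSwap n B B' D) ↔ IsLeast' j D := by
  rcases lt_abs.1 hj with hj | hj
  · have hfix : ∀ {D}, IsLeast' j D → tailSwap n B B' D = D := fun h =>
      eq_self_of_forall_lt hB hB' fun x hx => hj.trans_le (h.2 x hx)
    refine ⟨fun h => ?_, fun h => by rwa [hfix h]⟩
    rwa [← involutive hB hB' D, hfix h]
  · rw [← isLeast'_filter_lt_iff (by omega : j < -(n : ℤ)), filter_lt hB hB',
      isLeast'_filter_lt_iff (by omega)]

theorem erase_of_isLeast' (hB : WindowBlock n B) (hB' : WindowBlock n B') (hj : (n : ℤ) < |j|)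
    (hD : IsLeast' j D) : tailSwap n B B' (D.erase j) = (tailSwap n B B' D).erase j := by
  rcases lt_abs.1 hj with hj | hj
  · have hlt : ∀ x ∈ D, (n : ℤ) < x := fun x hx => hj.trans_le (hD.2 x hx)
    rw [eq_self_of_forall_lt hB hB' hlt,
      eq_self_of_forall_lt hB hB' fun x hx => hlt x (Finset.mem_of_mem_erase hx)]
  · exact erase_of_lt hB hB' (by omega)

theorem ltAll_iff (hB : WindowBlock n B) (hB' : WindowBlock n B') (hj : (n : ℤ) < |j|) :
    LtAll j (tailSwap n B B' D) ↔ LtAll j D := by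
  rcases lt_abs.1 hj with hj | hj
  · have hfix : ∀ {D}, LtAll j D → tailSwap n B B' D = D := fun h =>
      eq_self_of_forall_lt hB hB' fun x hx => hj.trans (h x hx)
    refine ⟨fun h => ?_, fun h => by rwa [hfix h]⟩
    rwa [← involutive hB hB' D, hfix h]
  · rw [← ltAll_filter_lt_iff (by omega : j < -(n : ℤ)), filter_lt hB hB',
      ltAll_filter_lt_iff (by omega)]

theorem insert_of_ltAll (hB : WindowBlock n B) (hB' : WindowBlock n B') (hj : (n : ℤ) < |j|)
    (hD : LtAll j D) : tailSwap n B B' (insert j D) = insert j (tailSwap n B B' D) := by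
  rcases lt_abs.1 hj with hj | hj
  · have hlt : ∀ x ∈ D, (n : ℤ) < x := fun x hx => hj.trans (hD x hx)
    rw [eq_self_of_forall_lt hB hB' hlt, eq_self_of_forall_lt hB hB' fun x hx => by
      rcases Finset.mem_insert.1 hx with rfl | hx
      exacts [hj, hlt x hx]]
  · exact insert_of_lt (by omega)

end tailSwap

end IndexSets

def tailOps (a : ℤ → H →L[ℂ] H) (n : ℕ) : Set (H →L[ℂ] H) :=
  {T | ∃ j : ℤ, (n : ℤ) < |j| ∧ T = a j}

theorem eventually_forall_abs_lt (A : Finset ℤ) : ∀ᶠ N : ℕ in atTop, ∀ x ∈ A, |x| < N :=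
  (Filter.eventually_all_finset A).2 fun x _ =>
    (eventually_gt_atTop x.natAbs).mono fun N hN => by rw [Int.abs_eq_natAbs]; exact_mod_cast hN

namespace MonotoneAnnOps

variable {e : Finset ℤ → H} {a : ℤ → H →L[ℂ] H} {T : H →L[ℂ] H} {n : ℕ} {B B' : Finset ℤ}

def hilbertBasis (hma : MonotoneAnnOps e a) : HilbertBasis (Finset ℤ) ℂ H :=
  HilbertBasis.mk hma.1 hma.2.1.ge

theorem coe_hilbertBasis (hma : MonotoneAnnOps e a) : ⇑hma.hilbertBasis = e :=
  HilbertBasis.coe_mk _ _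

theorem eq_inner_smul_of_inner_eq_zero (hma : MonotoneAnnOps e a) {x : H} {A : Finset ℤ}
    (h : ∀ A' ≠ A, ⟪e A', x⟫_ℂ = 0) : x = ⟪e A, x⟫_ℂ • e A := by
  have := hma.hilbertBasis.eq_inner_smul_of_inner_eq_zero (x := x) (i := A)
  simp only [coe_hilbertBasis] at this
  exact this h

theorem orthonormal_singleton (hma : MonotoneAnnOps e a) :
    Orthonormal ℂ fun N : ℕ => e {(N : ℤ)} :=
  hma.1.comp _ fun N M h => by simpa using h

theorem inner_apply_vacuum_eq_zero (hma : MonotoneAnnOps e a) {m : H →L[ℂ] H}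
    (hm : m ∈ Set.centralizer (tailOps a n ∪ star '' tailOps a n)) {A : Finset ℤ}
    (hA : A.Nonempty) : ⟪e A, m (e ∅)⟫_ℂ = 0 := by
  obtain ⟨N, hAN, hnN⟩ := ((eventually_forall_abs_lt A).and (eventually_gt_atTop n)).exists
  have hN : (n : ℤ) < |(N : ℤ)| := by rw [Nat.abs_cast]; exact_mod_cast hnN
  have hcomm : ∀ S ∈ tailOps a n ∪ star '' tailOps a n, ∀ x, S (m x) = m (S x) :=
    fun S hS x => by rw [← mul_apply_eq_comp, hm S hS, mul_apply_eq_comp]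
  have hcre : star (a N) (e ∅) = e {(N : ℤ)} := by
    simpa using (hma.2.2.2 N ∅).1 (by simp [LtAll])
  have hann : a N (e {(N : ℤ)}) = e ∅ := by
    simpa using (hma.2.2.1 N {(N : ℤ)}).1 (by simp [IsLeast'])
  have hkill : star (a N) (e A) = 0 := (hma.2.2.2 N A).2 fun h => by
    obtain ⟨x, hx⟩ := hA
    have := h x hx
    have := abs_lt.1 (hAN x hx)
    omega
  calc ⟪e A, m (e ∅)⟫_ℂ = ⟪e A, m (a N (star (a N) (e ∅)))⟫_ℂ := by rw [hcre, hann]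
    _ = ⟪e A, a N (star (a N) (m (e ∅)))⟫_ℂ := by
      rw [← hcomm _ (Or.inl ⟨N, hN, rfl⟩), ← hcomm _ (Or.inr ⟨a N, ⟨N, hN, rfl⟩, rfl⟩)]
    _ = ⟪star (a N) (e A), star (a N) (m (e ∅))⟫_ℂ := by
      rw [ContinuousLinearMap.star_eq_adjoint, ContinuousLinearMap.adjoint_inner_left]
    _ = 0 := by rw [hkill, inner_zero_left]

theorem apply_vacuum_eq_smul (hma : MonotoneAnnOps e a) {m : H →L[ℂ] H}
    (hm : m ∈ Set.centralizer (tailOps a n ∪ star '' tailOps a n)) :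
    m (e ∅) = ⟪e ∅, m (e ∅)⟫_ℂ • e ∅ :=
  hma.eq_inner_smul_of_inner_eq_zero fun _ hA =>
    hma.inner_apply_vacuum_eq_zero hm (Finset.nonempty_iff_ne_empty.2 hA)

theorem projVac_vacuum_mem_vNgen (hma : MonotoneAnnOps e a) (n : ℕ) :
    projVac (e ∅) ∈ vNgen (tailOps a n) := fun m hm => by
  have hm' : star m ∈ Set.centralizer (tailOps a n ∪ star '' tailOps a n) := by
    rw [Set.image_star] at hm ⊢
    exact Set.star_mem_centralizer hm
  exact (commute_projVac (hma.apply_vacuum_eq_smul hm) (hma.apply_vacuum_eq_smul hm')).eq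

theorem permute_tailSwap_apply (hma : MonotoneAnnOps e a) (hB : WindowBlock n B)
    (hB' : WindowBlock n B') (D : Finset ℤ) :
    hma.hilbertBasis.permute (tailSwap.involutive hB hB').toPerm (e D) = e (tailSwap n B B' D) := by
  have := hma.hilbertBasis.permute_apply (tailSwap.involutive hB hB').toPerm D
  rwa [coe_hilbertBasis] at this

theorem commute_permute_tailSwap (hma : MonotoneAnnOps e a) (hB : WindowBlock n B)
    (hB' : WindowBlock n B') (hT : T ∈ tailOps a n ∪ star '' tailOps a n) :
    Commute (hma.hilbertBasis.permute (tailSwap.involutive hB hB').toPerm : H →L[ℂ] H) T := by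
  obtain ⟨j, hj, rfl⟩ | ⟨_, ⟨j, hj, rfl⟩, rfl⟩ := hT
  · refine hma.hilbertBasis.commute_permute (p := IsLeast' j) (g := fun D => D.erase j)
      (by rw [coe_hilbertBasis]; exact hma.2.2.1 j) (fun D => tailSwap.isLeast'_iff hB hB' hj)
      (fun D => tailSwap.erase_of_isLeast' hB hB' hj)
  · refine hma.hilbertBasis.commute_permute (p := LtAll j) (g := insert j)
      (by rw [coe_hilbertBasis]; exact hma.2.2.2 j) (fun D => tailSwap.ltAll_iff hB hB' hj)
      (fun D => tailSwap.insert_of_ltAll hB hB' hj)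

theorem inner_tailSwap_eq (hma : MonotoneAnnOps e a) (hB : WindowBlock n B)
    (hB' : WindowBlock n B') (hT : T ∈ vNgen (tailOps a n)) (A A' : Finset ℤ) :
    ⟪e (tailSwap n B B' A'), T (e (tailSwap n B B' A))⟫_ℂ = ⟪e A', T (e A)⟫_ℂ := by
  have hUT := hT _ fun S hS => (hma.commute_permute_tailSwap hB hB' hS).eq.symm
  have := LinearIsometryEquiv.inner_map_apply_map_of_commute _ hUT (e A') (e A)
  rwa [hma.permute_tailSwap_apply hB hB', hma.permute_tailSwap_apply hB hB'] at this

theorem eventually_inner_swap_singleton_eq (hma : MonotoneAnnOps e a)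
    (hT : ∀ n : ℕ, T ∈ vNgen (tailOps a n)) {A : Finset ℤ} (hA : A.Nonempty) :
    ∀ᶠ N : ℕ in atTop, ∀ C C' : Finset ℤ, (∀ x ∈ C, -(N : ℤ) ≤ x) → (∀ x ∈ C', -(N : ℤ) ≤ x) →
      ⟪e (Equiv.swap A {(N : ℤ)} C'), T (e (Equiv.swap A {(N : ℤ)} C))⟫_ℂ = ⟪e C', T (e C)⟫_ℂ := by
  filter_upwards [eventually_forall_abs_lt A] with N hN C C' hC hC'
  have hB : WindowBlock N A := ⟨hA, fun x hx => (hN x hx).le⟩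
  have hB' : WindowBlock N {(N : ℤ)} := ⟨Finset.singleton_nonempty _, by simp⟩
  rw [← tailSwap.eq_swap hC, ← tailSwap.eq_swap hC']
  exact hma.inner_tailSwap_eq hB hB' (hT N) C C'

theorem inner_eq_zero_of_ne (hma : MonotoneAnnOps e a) (hT : ∀ n : ℕ, T ∈ vNgen (tailOps a n))
    {A A' : Finset ℤ} (hA' : A'.Nonempty) (hAA' : A ≠ A') : ⟪e A', T (e A)⟫_ℂ = 0 := by
  refine hma.orthonormal_singleton.eq_zero_of_eventually_inner_eq (T (e A)) ?_
  filter_upwards [hma.eventually_inner_swap_singleton_eq hT hA', eventually_forall_abs_lt A,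
    eventually_forall_abs_lt A'] with N hswap hAN hA'N
  have hNA : A ≠ {(N : ℤ)} := by
    rintro rfl
    simpa using hAN N (Finset.mem_singleton_self _)
  have h := hswap A A' (fun x hx => (abs_lt.1 (hAN x hx)).1.le)
    (fun x hx => (abs_lt.1 (hA'N x hx)).1.le)
  rwa [Equiv.swap_apply_left, Equiv.swap_apply_of_ne_of_ne hAA' hNA] at h

theorem inner_vacuum_eq_zero (hma : MonotoneAnnOps e a) (hT : ∀ n : ℕ, T ∈ vNgen (tailOps a n))
    {A : Finset ℤ} (hA : A.Nonempty) : ⟪e ∅, T (e A)⟫_ℂ = 0 := by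
  suffices starRingEnd ℂ ⟪e ∅, T (e A)⟫_ℂ = 0 from (map_eq_zero _).1 this
  refine hma.orthonormal_singleton.eq_zero_of_eventually_inner_eq (star T (e ∅)) ?_
  filter_upwards [hma.eventually_inner_swap_singleton_eq hT hA, eventually_forall_abs_lt A]
    with N hswap hAN
  have h := hswap A ∅ (fun x hx => (abs_lt.1 (hAN x hx)).1.le) (by simp)
  rw [Equiv.swap_apply_left, Equiv.swap_apply_of_ne_of_ne hA.ne_empty.symm
    (Finset.singleton_ne_empty _).symm] at h
  rw [← h, ContinuousLinearMap.star_eq_adjoint, ContinuousLinearMap.adjoint_inner_right,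
    inner_conj_symm]

theorem inner_diag_eq (hma : MonotoneAnnOps e a) (hT : ∀ n : ℕ, T ∈ vNgen (tailOps a n))
    {A A' : Finset ℤ} (hA : A.Nonempty) (hA' : A'.Nonempty) :
    ⟪e A, T (e A)⟫_ℂ = ⟪e A', T (e A')⟫_ℂ := by
  have diag : ∀ {C : Finset ℤ}, C.Nonempty →
      ∀ᶠ N : ℕ in atTop, ⟪e {(N : ℤ)}, T (e {(N : ℤ)})⟫_ℂ = ⟪e C, T (e C)⟫_ℂ := fun {C} hC => by
    filter_upwards [hma.eventually_inner_swap_singleton_eq hT hC, eventually_forall_abs_lt C]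
      with N hswap hCN
    have hle : ∀ x ∈ C, -(N : ℤ) ≤ x := fun x hx => (abs_lt.1 (hCN x hx)).1.le
    simpa only [Equiv.swap_apply_left] using hswap _ _ hle hle
  obtain ⟨N, h, h'⟩ := ((diag hA).and (diag hA')).exists
  rw [← h, h']

theorem apply_eq_inner_smul (hma : MonotoneAnnOps e a) (hT : ∀ n : ℕ, T ∈ vNgen (tailOps a n))
    (A : Finset ℤ) : T (e A) = ⟪e A, T (e A)⟫_ℂ • e A := by
  refine hma.eq_inner_smul_of_inner_eq_zero fun A' hA' => ?_
  rcases A'.eq_empty_or_nonempty with rfl | hA'ne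
  · exact hma.inner_vacuum_eq_zero hT (Finset.nonempty_iff_ne_empty.2 hA'.symm)
  · exact hma.inner_eq_zero_of_ne hT hA'ne hA'.symm

theorem eq_of_forall_mem_vNgen (hma : MonotoneAnnOps e a) (hT : ∀ n : ℕ, T ∈ vNgen (tailOps a n)) :
    T = ⟪e ∅, T (e ∅)⟫_ℂ • projVac (e ∅) + ⟪e {0}, T (e {0})⟫_ℂ • (1 - projVac (e ∅)) := by
  refine hma.hilbertBasis.ext_continuousLinearMap fun A => ?_
  rw [hma.coe_hilbertBasis, hma.apply_eq_inner_smul hT A]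
  rcases A.eq_empty_or_nonempty with rfl | hA
  · simp [projVac, hma.1.1]
  · simp [projVac, hma.1.2 hA.ne_empty.symm, hma.inner_diag_eq hT hA (Finset.singleton_nonempty 0)]

end MonotoneAnnOps

theorem stmt4 (e : Finset ℤ → H) (a : ℤ → H →L[ℂ] H) (hma : MonotoneAnnOps e a) :
    (⋂ n : ℕ, vNgen {T : H →L[ℂ] H | ∃ j : ℤ, (n : ℤ) < |j| ∧ T = a j}) =
      {T : H →L[ℂ] H | ∃ c d : ℂ, T = c • projVac (e ∅) + d • (1 - projVac (e ∅))} := by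
  ext T
  simp only [Set.mem_iInter]
  constructor
  · exact fun hT => ⟨_, _, hma.eq_of_forall_mem_vNgen hT⟩
  · rintro ⟨c, d, rfl⟩ n
    exact smul_add_smul_one_sub_mem_vNgen (hma.projVac_vacuum_mem_vNgen n) c d

end
end

section
/- Let U ∈ B(F_m) be the operator determined by Uζ = ζ and U e_{(i_1,…,i_n)} = e_{(i_1+1,…,i_n+1)} for all n ≥ 1 and i_1 < ⋯ < i_n. Then U is unitary, U a_j U* = a_{j+1} for every j ∈ ℤ, and the tail algebra ℂP_ζ + ℂP_ζ^⊥ (P_ζ the projection onto ℂζ) is strictly contained in the stationary von Neumann algebra {T ∈ B(F_m) : UTU* = T}; indeed U belongs to the stationary algebra but not to ℂP_ζ + ℂP_ζ^⊥. -/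
noncomputable section

variable {H : Type*} [NormedAddCommGroup H] [InnerProductSpace ℂ H] [CompleteSpace H]

open scoped InnerProductSpace

private lemma img_sub_add (A : Finset ℤ) : (A.image (· - 1)).image (· + 1) = A := by
  ext x
  simp only [Finset.mem_image, exists_exists_and_eq_and]
  constructor
  · rintro ⟨b, hb, h⟩
    have hb' : b = x := by omega
    subst hb'; exact hb
  · intro hx; exact ⟨x, hx, by ring⟩

private lemma img_add_sub (A : Finset ℤ) : (A.image (· + 1)).image (· - 1) = A := by
  ext x
  simp only [Finset.mem_image, exists_exists_and_eq_and]
  constructor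
  · rintro ⟨b, hb, h⟩
    have hb' : b = x := by omega
    subst hb'; exact hb
  · intro hx; exact ⟨x, hx, by ring⟩

private lemma vec_ext (e : Finset ℤ → H)
    (hd : (Submodule.span ℂ (Set.range e)).topologicalClosure = ⊤)
    {x y : H} (h : ∀ A, ⟪e A, x⟫_ℂ = ⟪e A, y⟫_ℂ) : x = y := by
  have hbot : (Submodule.span ℂ (Set.range e))ᗮ = ⊥ :=
    Submodule.topologicalClosure_eq_top_iff.mp hd
  have hx : x - y ∈ (Submodule.span ℂ (Set.range e))ᗮ := by
    rw [Submodule.mem_orthogonal]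
    intro u hu
    induction hu using Submodule.span_induction with
    | mem u hu => obtain ⟨A, rfl⟩ := hu; rw [inner_sub_right, h A, sub_self]
    | zero => simp
    | add u v _ _ hu hv => rw [inner_add_left, hu, hv, add_zero]
    | smul c u _ hu => rw [inner_smul_left, hu, mul_zero]
  rw [hbot, Submodule.mem_bot, sub_eq_zero] at hx
  exact hx

private lemma clm_ext (e : Finset ℤ → H)
    (hd : (Submodule.span ℂ (Set.range e)).topologicalClosure = ⊤)
    {S T : H →L[ℂ] H} (h : ∀ A, S (e A) = T (e A)) : S = T := by
  have hdense : Dense (Submodule.span ℂ (Set.range e) : Set H) :=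
    Submodule.dense_iff_topologicalClosure_eq_top.mpr hd
  exact ContinuousLinearMap.ext_on hdense (by rintro _ ⟨A, rfl⟩; exact h A)

private lemma isLeast'_image_sub (j : ℤ) (A : Finset ℤ) :
    IsLeast' j (A.image (· - 1)) ↔ IsLeast' (j + 1) A := by
  constructor
  · rintro ⟨hm, hlb⟩
    simp only [Finset.mem_image] at hm
    obtain ⟨b, hb, hbj⟩ := hm
    have : b = j + 1 := by omega
    refine ⟨this ▸ hb, fun x hx => ?_⟩
    have := hlb (x - 1) (Finset.mem_image_of_mem _ hx)
    omega
  · rintro ⟨hm, hlb⟩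
    refine ⟨?_, ?_⟩
    · have : j = (j + 1) - 1 := by ring
      rw [this]; exact Finset.mem_image_of_mem _ hm
    · intro x hx
      simp only [Finset.mem_image] at hx
      obtain ⟨b, hb, rfl⟩ := hx
      have := hlb b hb
      omega

theorem stmt14 (e : Finset ℤ → H) (a : ℤ → H →L[ℂ] H) (hma : MonotoneAnnOps e a)
    (U : H →L[ℂ] H)
    -- U is determined by Uζ = ζ and U e_{(i₁,…,i_n)} = e_{(i₁+1,…,i_n+1)}
    (hU : ∀ A : Finset ℤ, U (e A) = e (A.image (· + 1))) :
    -- U is unitary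
    U * star U = 1 ∧ star U * U = 1 ∧
    -- U implements the shift: U a_j U* = a_{j+1}
    (∀ j : ℤ, U * a j * star U = a (j + 1)) ∧
    -- the tail algebra ℂ P_ζ + ℂ P_ζ^⊥ is strictly contained in the stationary algebra
    {T : H →L[ℂ] H | ∃ c d : ℂ, T = c • projVac (e ∅) + d • (1 - projVac (e ∅))} ⊂
      {T : H →L[ℂ] H | U * T * star U = T} ∧
    -- indeed U is in the stationary algebra but not in ℂ P_ζ + ℂ P_ζ^⊥
    U ∈ {T : H →L[ℂ] H | U * T * star U = T} ∧
    U ∉ {T : H →L[ℂ] H | ∃ c d : ℂ, T = c • projVac (e ∅) + d • (1 - projVac (e ∅))} := by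
  obtain ⟨horth, hd, hann, -⟩ := hma
  have hinner : ∀ A B : Finset ℤ, ⟪e A, e B⟫_ℂ = if A = B then 1 else 0 :=
    orthonormal_iff_ite.mp horth
  -- the adjoint of U on basis vectors
  have hUs : ∀ A : Finset ℤ, star U (e A) = e (A.image (· - 1)) := by
    intro A
    apply vec_ext e hd
    intro B
    rw [ContinuousLinearMap.star_eq_adjoint, ContinuousLinearMap.adjoint_inner_right,
      hU, hinner, hinner]
    congr 1
    simp only [eq_iff_iff]
    constructor
    · rintro rfl; rw [img_add_sub]
    · rintro rfl; rw [img_sub_add]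
  -- unitarity
  have hUUs : U * star U = 1 := by
    apply clm_ext e hd
    intro A
    rw [ContinuousLinearMap.mul_apply, hUs, hU, img_sub_add, ContinuousLinearMap.one_apply]
  have hsUU : star U * U = 1 := by
    apply clm_ext e hd
    intro A
    rw [ContinuousLinearMap.mul_apply, hU, hUs, img_add_sub, ContinuousLinearMap.one_apply]
  -- the shift property
  have hshift : ∀ j : ℤ, U * a j * star U = a (j + 1) := by
    intro j
    apply clm_ext e hd
    intro A
    rw [ContinuousLinearMap.mul_apply, ContinuousLinearMap.mul_apply, hUs]
    by_cases h : IsLeast' (j + 1) A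
    · rw [(hann j (A.image (· - 1))).1 ((isLeast'_image_sub j A).mpr h),
        (hann (j + 1) A).1 h]
      have herase : (A.image (· - 1)).erase j = (A.erase (j + 1)).image (· - 1) := by
        have hinj : Function.Injective (· - 1 : ℤ → ℤ) := fun x y hxy => by
          simpa using hxy
        rw [Finset.image_erase hinj]
        norm_num
      rw [herase, hU, img_sub_add]
    · rw [(hann j (A.image (· - 1))).2 (fun hc => h ((isLeast'_image_sub j A).mp hc)),
        (hann (j + 1) A).2 h, map_zero]
  -- U fixes the vacuum projection
  have hP : U * projVac (e ∅) * star U = projVac (e ∅) := by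
    ext x
    rw [ContinuousLinearMap.mul_apply, ContinuousLinearMap.mul_apply]
    simp only [projVac, ContinuousLinearMap.smulRight_apply, innerSL_apply_apply]
    rw [map_smul, hU, Finset.image_empty, ContinuousLinearMap.star_eq_adjoint,
      ContinuousLinearMap.adjoint_inner_right, hU, Finset.image_empty]
  -- inclusion of the tail algebra in the stationary algebra
  have hsub : {T : H →L[ℂ] H | ∃ c d : ℂ, T = c • projVac (e ∅) + d • (1 - projVac (e ∅))} ⊆
      {T : H →L[ℂ] H | U * T * star U = T} := by
    rintro T ⟨c, d, rfl⟩
    show U * _ * star U = _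
    simp only [mul_add, add_mul, mul_smul_comm, smul_mul_assoc, mul_sub, sub_mul, mul_one]
    rw [hP, hUUs]
  -- U is stationary
  have hUstat : U ∈ {T : H →L[ℂ] H | U * T * star U = T} := by
    show U * U * star U = U
    rw [mul_assoc, hUUs, mul_one]
  -- U is not in the tail algebra
  have hUnot : U ∉ {T : H →L[ℂ] H |
      ∃ c d : ℂ, T = c • projVac (e ∅) + d • (1 - projVac (e ∅))} := by
    rintro ⟨c, d, hcd⟩
    have h0 : projVac (e ∅) (e {0}) = 0 := by
      simp only [projVac, ContinuousLinearMap.smulRight_apply, innerSL_apply_apply]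
      rw [hinner, if_neg (Finset.singleton_ne_empty (0 : ℤ)).symm, zero_smul]
    have happ := congrArg (fun T : H →L[ℂ] H => T (e {0})) hcd
    simp only [ContinuousLinearMap.add_apply, ContinuousLinearMap.smul_apply,
      ContinuousLinearMap.sub_apply, ContinuousLinearMap.one_apply, h0, smul_zero,
      zero_add, sub_zero] at happ
    rw [hU] at happ
    have himg : ({0} : Finset ℤ).image (· + 1) = {1} := by decide
    rw [himg] at happ
    have h1 := congrArg (fun x => ⟪e {1}, x⟫_ℂ) happ
    simp only [inner_smul_right] at h1
    rw [hinner, hinner] at h1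
    simp at h1
  exact ⟨hUUs, hsUU, hshift, ⟨hsub, fun hle => hUnot (hle hUstat)⟩, hUstat, hUnot⟩

end
end

section
/- Let U, S ∈ B(F_m) be the operators determined by Uζ = ζ, U e_{(i_1,…,i_n)} = e_{(i_1+1,…,i_n+1)}, and Sζ = ζ, S e_{(i_1,…,i_n)} = e_{(i_1,…,i_{n−1},i_n+1)} for all n ≥ 1 and i_1 < ⋯ < i_n. Then S is a proper isometry (S*S = I but SS* < I; in particular e_{(1,2)} is not in the range of S), S commutes with U, and consequently the stationary von Neumann algebra {T ∈ B(F_m) : UTU* = T} is noncommutative. -/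
/-!
Both `S` and `U` map a basis vector `e A` to `e (g A)`, with `g = shiftMax` resp. `g A = A + 1`.
An operator acting on a Hilbert basis through an injective map `g` is an isometry whose adjoint
kills every basis vector outside the image of `g`, and it is unitary when `g` is bijective.
The map `shiftMax` is injective and misses `{1, 2}`: the image of `A` never contains the old
maximum of `A`, which is the new maximum minus one. Since `shiftMax` commutes with translations,
`S` is a proper isometry commuting with the unitary `U`; hence `S` and `S*` are `U`-stationary,
and they do not commute because `S*S = 1 ≠ SS*`.
-/

noncomputable section

variable {H : Type*} [NormedAddCommGroup H] [InnerProductSpace ℂ H] [CompleteSpace H]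

open Finset

theorem Commute.mul_mul_star_eq_self {R : Type*} [Monoid R] [StarMul R] {t u : R}
    (h : Commute t u) (hu : u * star u = 1) : u * t * star u = t := by
  rw [← h.eq, mul_assoc, hu, mul_one]

namespace HilbertBasis

variable {ι 𝕜 E : Type*} [RCLike 𝕜] [NormedAddCommGroup E] [InnerProductSpace 𝕜 E]
  (b : HilbertBasis ι 𝕜 E) {T : E →L[𝕜] E} {f : ι → ι}

theorem clm_ext {T₁ T₂ : E →L[𝕜] E} (h : ∀ i, T₁ (b i) = T₂ (b i)) : T₁ = T₂ :=
  ContinuousLinearMap.ext_on (Submodule.dense_iff_topologicalClosure_eq_top.mpr b.dense_span)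
    (by rintro _ ⟨i, rfl⟩; exact h i)

variable [CompleteSpace E]

theorem inner_adjoint_apply (hT : ∀ i, T (b i) = b (f i)) (i j : ι) :
    inner 𝕜 (b i) (ContinuousLinearMap.adjoint T (b j)) = inner 𝕜 (b (f i)) (b j) := by
  rw [ContinuousLinearMap.adjoint_inner_right, hT]

theorem adjoint_apply_of_notMem_range (hT : ∀ i, T (b i) = b (f i)) {j : ι}
    (hj : j ∉ Set.range f) : ContinuousLinearMap.adjoint T (b j) = 0 := by
  classical
  refine b.repr.injective (lp.ext <| funext fun i => ?_)
  rw [b.repr_apply_apply, inner_adjoint_apply b hT, orthonormal_iff_ite.mp b.orthonormal,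
    if_neg fun h => hj ⟨i, h⟩, map_zero]
  rfl

theorem adjoint_apply_of_injective (hT : ∀ i, T (b i) = b (f i)) (hf : f.Injective) (j : ι) :
    ContinuousLinearMap.adjoint T (b (f j)) = b j := by
  classical
  refine b.repr.injective (lp.ext <| funext fun i => ?_)
  rw [b.repr_apply_apply, b.repr_apply_apply, inner_adjoint_apply b hT,
    orthonormal_iff_ite.mp b.orthonormal, orthonormal_iff_ite.mp b.orthonormal, hf.eq_iff]

theorem adjoint_mul_self_of_injective (hT : ∀ i, T (b i) = b (f i)) (hf : f.Injective) :
    ContinuousLinearMap.adjoint T * T = 1 :=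
  b.clm_ext fun i => by
    rw [mul_apply_eq_comp, hT, b.adjoint_apply_of_injective hT hf]; rfl

theorem mul_adjoint_self_of_bijective (hT : ∀ i, T (b i) = b (f i)) (hf : f.Bijective) :
    T * ContinuousLinearMap.adjoint T = 1 :=
  b.clm_ext fun j => by
    obtain ⟨i, rfl⟩ := hf.surjective j
    rw [mul_apply_eq_comp, b.adjoint_apply_of_injective hT hf.injective, hT]; rfl

theorem not_exists_apply_eq_of_notMem_range (hT : ∀ i, T (b i) = b (f i)) (hf : f.Injective)
    {j : ι} (hj : j ∉ Set.range f) : ¬∃ x, T x = b j := by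
  rintro ⟨x, hx⟩
  have hx0 : x = 0 := by
    rw [← one_apply_eq_self (F := E →L[𝕜] E) x, ← b.adjoint_mul_self_of_injective hT hf,
      mul_apply_eq_comp, hx, b.adjoint_apply_of_notMem_range hT hj]
  simpa [← hx, hx0] using b.orthonormal.1 j

end HilbertBasis

namespace Finset

def shiftMax (A : Finset ℤ) : Finset ℤ :=
  if h : A.Nonempty then insert (A.max' h + 1) (A.erase (A.max' h)) else ∅

def unshiftMax (B : Finset ℤ) : Finset ℤ :=
  if h : B.Nonempty then insert (B.max' h - 1) (B.erase (B.max' h)) else ∅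

variable {A : Finset ℤ}

theorem shiftMax_of_nonempty (h : A.Nonempty) :
    shiftMax A = insert (A.max' h + 1) (A.erase (A.max' h)) :=
  dif_pos h

@[simp]
theorem shiftMax_empty : shiftMax ∅ = ∅ :=
  rfl

theorem max'_add_one_notMem (h : A.Nonempty) : A.max' h + 1 ∉ A := fun hm => by
  have := le_max' A _ hm
  omega

theorem shiftMax_nonempty (h : A.Nonempty) : (shiftMax A).Nonempty := by
  rw [shiftMax_of_nonempty h]
  exact insert_nonempty _ _

theorem le_of_mem_shiftMax (h : A.Nonempty) {x : ℤ} (hx : x ∈ shiftMax A) :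
    x ≤ A.max' h + 1 := by
  rw [shiftMax_of_nonempty h, mem_insert] at hx
  rcases hx with rfl | hx
  · exact le_rfl
  · exact (lt_max'_of_mem_erase_max' A h hx).le.trans (le_add_of_nonneg_right zero_le_one)

theorem max'_shiftMax (h : A.Nonempty) (h' : (shiftMax A).Nonempty) :
    (shiftMax A).max' h' = A.max' h + 1 :=
  le_antisymm (max'_le _ _ _ fun _ => le_of_mem_shiftMax h)
    (le_max' _ _ (by rw [shiftMax_of_nonempty h]; exact mem_insert_self _ _))

theorem max'_notMem_shiftMax (h : A.Nonempty) : A.max' h ∉ shiftMax A := by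
  rw [shiftMax_of_nonempty h, mem_insert, not_or]
  exact ⟨by omega, notMem_erase _ _⟩

theorem unshiftMax_shiftMax : Function.LeftInverse unshiftMax shiftMax := by
  intro A
  by_cases h : A.Nonempty
  · rw [unshiftMax, dif_pos (shiftMax_nonempty h), max'_shiftMax h, add_sub_cancel_right,
      shiftMax_of_nonempty h, erase_insert fun hm => max'_add_one_notMem h (mem_of_mem_erase hm),
      insert_erase (max'_mem A h)]
  · rw [not_nonempty_iff_eq_empty.mp h]
    rfl

theorem shiftMax_injective : Function.Injective shiftMax :=
  unshiftMax_shiftMax.injective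

theorem pair_add_one_notMem_range_shiftMax (n : ℤ) : {n, n + 1} ∉ Set.range shiftMax := by
  rintro ⟨A, hA⟩
  have h : A.Nonempty := by
    by_contra h
    rw [not_nonempty_iff_eq_empty.mp h, shiftMax_empty] at hA
    exact insert_ne_empty _ _ hA.symm
  have hmax : A.max' h + 1 ∈ ({n, n + 1} : Finset ℤ) := by
    rw [← hA, shiftMax_of_nonempty h]
    exact mem_insert_self _ _
  have hle : n + 1 ≤ A.max' h + 1 := le_of_mem_shiftMax h (by rw [hA]; simp)
  have hn : A.max' h = n := by
    simp only [mem_insert, mem_singleton] at hmax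
    omega
  exact max'_notMem_shiftMax h (by rw [hA, hn]; exact mem_insert_self _ _)

theorem shiftMax_image_add (c : ℤ) (A : Finset ℤ) :
    shiftMax (A.image (· + c)) = (shiftMax A).image (· + c) := by
  by_cases h : A.Nonempty
  · rw [shiftMax_of_nonempty (h.image _), shiftMax_of_nonempty h,
      max'_image (fun _ _ hab => add_le_add_left hab c), image_insert,
      image_erase (add_left_injective c), add_right_comm]
  · simp [not_nonempty_iff_eq_empty.mp h]

theorem image_add_bijective (c : ℤ) : Function.Bijective fun A : Finset ℤ => A.image (· + c) :=
  ⟨image_injective (add_left_injective c), fun B =>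
    ⟨B.image (· - c), by simp [image_image, Function.comp_def]⟩⟩

end Finset

theorem stmt15 (e : Finset ℤ → H)
    -- the canonical orthonormal basis of the monotone Fock space, indexed by finite subsets
    -- of ℤ (e ∅ is the vacuum ζ)
    (he : Orthonormal ℂ e)
    (htot : (Submodule.span ℂ (Set.range e)).topologicalClosure = ⊤)
    (U S : H →L[ℂ] H)
    -- U is determined by Uζ = ζ, U e_{(i₁,…,i_n)} = e_{(i₁+1,…,i_n+1)}
    (hU : ∀ A : Finset ℤ, U (e A) = e (A.image (· + 1)))
    -- S is determined by Sζ = ζ, S e_{(i₁,…,i_n)} = e_{(i₁,…,i_{n-1},i_n+1)}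
    (hS0 : S (e ∅) = e ∅)
    (hS : ∀ (A : Finset ℤ) (h : A.Nonempty),
      S (e A) = e (insert (A.max' h + 1) (A.erase (A.max' h)))) :
    -- S is a proper isometry: S*S = I but SS* < I; e_{(1,2)} is not in the range of S
    star S * S = 1 ∧ S * star S ≠ 1 ∧ (¬ ∃ x : H, S x = e ({1, 2} : Finset ℤ)) ∧
    -- S commutes with U
    S * U = U * S ∧
    -- consequently the stationary von Neumann algebra is noncommutative
    (∃ T₁ ∈ {T : H →L[ℂ] H | U * T * star U = T}, ∃ T₂ ∈ {T : H →L[ℂ] H | U * T * star U = T},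
      T₁ * T₂ ≠ T₂ * T₁) := by
  let b := HilbertBasis.mk he htot.ge
  have hb : ⇑b = e := HilbertBasis.coe_mk he htot.ge
  have hUb : ∀ A, U (b A) = b (A.image (· + 1)) := hb ▸ hU
  have hSb : ∀ A, S (b A) = b (shiftMax A) := by
    intro A
    rw [hb]
    by_cases h : A.Nonempty
    · rw [hS A h, shiftMax_of_nonempty h]
    · rw [not_nonempty_iff_eq_empty.mp h, hS0, shiftMax_empty]
  have hiso : star S * S = 1 := b.adjoint_mul_self_of_injective hSb shiftMax_injective
  have hrange : ¬∃ x, S x = e {1, 2} := hb ▸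
    b.not_exists_apply_eq_of_notMem_range hSb shiftMax_injective
      (pair_add_one_notMem_range_shiftMax 1)
  have hproper : S * star S ≠ 1 := fun h =>
    hrange ⟨star S (e {1, 2}), by rw [← mul_apply_eq_comp, h, one_apply_eq_self]⟩
  have hcomm : S * U = U * S :=
    b.clm_ext fun A => by simp only [mul_apply_eq_comp, hUb, hSb, shiftMax_image_add]
  have hfix : U * S * star U = S :=
    Commute.mul_mul_star_eq_self hcomm
      (b.mul_adjoint_self_of_bijective hUb (image_add_bijective 1))
  have hfix_star : U * star S * star U = star S := by
    simpa only [star_mul, star_star, mul_assoc] using congrArg star hfix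
  exact ⟨hiso, hproper, hrange, hcomm, S, hfix, star S, hfix_star, by rwa [hiso]⟩

end
end
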